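/- Let A : X → Y be a bijective bounded linear operator between Banach spaces. If ‖A T A⁻¹‖ ≥ ‖T‖ for all invertible operators T ∈ B(X), then A is a scalar multiple of an isometry. -/

import Mathlib

/-!
Conjugation by `A` turns the rank-one perturbation `T = 1 + (l • g ∘ A)(·) • x` of the identity,
where `g` is a norming functional for `A y` and `l` is taken with `1 + l g (A x) ≠ 0` so that `T` is
invertible, into `1 + (l • g)(·) • A x`, whose norm is at most
`1 + ‖l‖ ‖A x‖`; on the other hand `T` moves `y` by `‖l‖ ‖A y‖ ‖x‖`. The hypothesis
`‖T‖ ≤ ‖A T A⁻¹‖` therefore gives `‖l‖ (‖A y‖ ‖x‖ - ‖A x‖ ‖y‖) ≤ 2 ‖y‖` for arbitrarily large `‖l‖`,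
so `‖A y‖ ‖x‖ ≤ ‖A x‖ ‖y‖` for all `x, y`. Hence `‖A x‖ = ‖A‖ ‖x‖`, and `A / ‖A‖` is an isometry.
-/

open Metric Set Pointwise

noncomputable def minMod {X Y : Type*} [NormedAddCommGroup X] [NormedSpace ℂ X]
    [NormedAddCommGroup Y] [NormedSpace ℂ Y] (T : X →L[ℂ] Y) : ℝ :=
  sInf ((fun x => ‖T x‖) '' {x | ‖x‖ = 1})

noncomputable def surjMod {X Y : Type*} [NormedAddCommGroup X] [NormedSpace ℂ X]
    [NormedAddCommGroup Y] [NormedSpace ℂ Y] (T : X →L[ℂ] Y) : ℝ :=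
  sSup {ε : ℝ | 0 ≤ ε ∧ ε • closedBall (0 : Y) 1 ⊆ T '' closedBall (0 : X) 1}

noncomputable def redMinMod {X Y : Type*} [NormedAddCommGroup X] [NormedSpace ℂ X]
    [NormedAddCommGroup Y] [NormedSpace ℂ Y] (T : X →L[ℂ] Y) : ℝ :=
  sInf ((fun x => ‖T x‖) '' {x | 1 ≤ infDist x (LinearMap.ker (T : X →ₗ[ℂ] Y) : Set X)})

theorem le_of_forall_nonneg_mul_le_mul_add {a b c : ℝ} (h : ∀ t : ℝ, 0 ≤ t → t * a ≤ t * b + c) :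
    a ≤ b := by
  by_contra! hba
  have hgap : 0 < a - b := sub_pos.mpr hba
  have key := h ((|c| + 1) / (a - b)) (by positivity)
  have ht : (|c| + 1) / (a - b) * (a - b) = |c| + 1 := div_mul_cancel₀ _ hgap.ne'
  nlinarith [le_abs_self c]

theorem RCLike.exists_norm_eq_and_one_add_mul_ne_zero {𝕜 : Type*} [RCLike 𝕜] (z : 𝕜) {t : ℝ}
    (ht : 0 ≤ t) : ∃ l : 𝕜, ‖l‖ = t ∧ 1 + l * z ≠ 0 := by
  by_cases hz : 1 + (t : 𝕜) * z = 0
  · refine ⟨-t, by simp [abs_of_nonneg ht], fun hz' => two_ne_zero (α := 𝕜) ?_⟩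
    linear_combination hz + hz'
  · exact ⟨t, by simp [abs_of_nonneg ht], hz⟩

namespace ContinuousLinearEquiv

variable {𝕜 X Y : Type*} [NontriviallyNormedField 𝕜] [NormedAddCommGroup X] [NormedSpace 𝕜 X]
  [NormedAddCommGroup Y] [NormedSpace 𝕜 Y]

noncomputable def dilatransvection (f : X →L[𝕜] 𝕜) (v : X) (h : IsUnit (1 + f v)) :
    X ≃L[𝕜] X :=
  { LinearEquiv.dilatransvection (f := (f : Module.Dual 𝕜 X)) h with
    continuous_toFun := by
      show Continuous fun x => x + f x • v
      fun_prop
    continuous_invFun := by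
      show Continuous fun x => x + f x • (-h.unit⁻¹ • v)
      fun_prop }

theorem dilatransvection_apply (f : X →L[𝕜] 𝕜) (v : X) (h : IsUnit (1 + f v)) (x : X) :
    dilatransvection f v h x = x + f x • v :=
  LinearEquiv.dilatransvection.apply

theorem norm_apply_mul_norm_le_norm_dilatransvection (f : X →L[𝕜] 𝕜) (v : X)
    (h : IsUnit (1 + f v)) (x : X) :
    ‖f x‖ * ‖v‖ ≤ (‖(dilatransvection f v h : X →L[𝕜] X)‖ + 1) * ‖x‖ :=
  calc ‖f x‖ * ‖v‖ = ‖dilatransvection f v h x - x‖ := by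
        rw [dilatransvection_apply, add_sub_cancel_left, norm_smul]
    _ ≤ ‖(dilatransvection f v h : X →L[𝕜] X) x‖ + ‖x‖ := norm_sub_le _ _
    _ ≤ (‖(dilatransvection f v h : X →L[𝕜] X)‖ + 1) * ‖x‖ := by
        rw [add_one_mul]
        gcongr
        exact ContinuousLinearMap.le_opNorm _ _

theorem norm_conj_dilatransvection_le (A : X ≃L[𝕜] Y) (f : X →L[𝕜] 𝕜) (v : X)
    (h : IsUnit (1 + f v)) :
    ‖(A : X →L[𝕜] Y).comp ((dilatransvection f v h : X →L[𝕜] X).comp (A.symm : Y →L[𝕜] X))‖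
      ≤ 1 + ‖f.comp (A.symm : Y →L[𝕜] X)‖ * ‖A v‖ := by
  refine ContinuousLinearMap.opNorm_le_bound _ (by positivity) fun w => ?_
  have hconj : (A : X →L[𝕜] Y).comp ((dilatransvection f v h : X →L[𝕜] X).comp
      (A.symm : Y →L[𝕜] X)) w = w + f (A.symm w) • A v := by
    simp [dilatransvection_apply]
  calc _ = ‖w + f (A.symm w) • A v‖ := by rw [hconj]
    _ ≤ ‖w‖ + ‖f.comp (A.symm : Y →L[𝕜] X) w‖ * ‖A v‖ := by
        grw [norm_add_le, norm_smul]
        rfl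
    _ ≤ (1 + ‖f.comp (A.symm : Y →L[𝕜] X)‖ * ‖A v‖) * ‖w‖ := by
        grw [ContinuousLinearMap.le_opNorm (f.comp (A.symm : Y →L[𝕜] X)) w]
        linarith

theorem _root_.ContinuousLinearMap.norm_apply_eq_opNorm_mul_of_forall_le (T : X →L[𝕜] Y)
    (h : ∀ x y, ‖T y‖ * ‖x‖ ≤ ‖T x‖ * ‖y‖) (x : X) : ‖T x‖ = ‖T‖ * ‖x‖ := by
  refine le_antisymm (T.le_opNorm x) ?_
  rcases eq_or_ne x 0 with rfl | hx
  · simp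
  have hx : 0 < ‖x‖ := norm_pos_iff.mpr hx
  rw [← le_div_iff₀ hx]
  refine T.opNorm_le_bound (by positivity) fun y => ?_
  rw [div_mul_eq_mul_div, le_div_iff₀ hx]
  exact h x y

end ContinuousLinearEquiv

section

variable {𝕜 X Y : Type*} [RCLike 𝕜] [NormedAddCommGroup X] [NormedSpace 𝕜 X]
  [NormedAddCommGroup Y] [NormedSpace 𝕜 Y]

theorem LinearEquiv.exists_eq_smul_linearIsometryEquiv_of_norm_map_eq_mul (A : X ≃ₗ[𝕜] Y)
    {c : ℝ} (hc : 0 ≤ c) (h : ∀ x, ‖A x‖ = c * ‖x‖) :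
    ∃ (c : 𝕜) (U : X ≃ₗᵢ[𝕜] Y), ∀ x, A x = c • U x := by
  rcases hc.eq_or_lt with rfl | hc
  · have hA : ∀ x : X, x = 0 := fun x => A.injective (by simpa using h x)
    exact ⟨1, ⟨A, fun x => by simp [hA x]⟩, fun x => by simp⟩
  have hc' : (c : 𝕜) ≠ 0 := RCLike.ofReal_ne_zero.mpr hc.ne'
  refine ⟨c, ⟨A.trans (LinearEquiv.smulOfNeZero 𝕜 Y _ (inv_ne_zero hc')), fun x => ?_⟩,
    fun x => ?_⟩
  · simp [norm_smul, h x, abs_of_pos hc, hc.ne']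
  · simp [smul_inv_smul₀ hc']

theorem ContinuousLinearEquiv.norm_apply_mul_norm_le_of_norm_le_norm_conj (A : X ≃L[𝕜] Y)
    (h : ∀ T : X ≃L[𝕜] X,
      ‖(T : X →L[𝕜] X)‖ ≤ ‖(A : X →L[𝕜] Y).comp ((T : X →L[𝕜] X).comp (A.symm : Y →L[𝕜] X))‖)
    (x y : X) : ‖A y‖ * ‖x‖ ≤ ‖A x‖ * ‖y‖ := by
  obtain ⟨g, hg, hgy⟩ := exists_dual_vector'' 𝕜 (A y)
  refine le_of_forall_nonneg_mul_le_mul_add (c := 2 * ‖y‖) fun t ht => ?_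
  obtain ⟨l, hl, hunit⟩ := RCLike.exists_norm_eq_and_one_add_mul_ne_zero (g (A x)) ht
  set f : X →L[𝕜] 𝕜 := (l • g).comp (A : X →L[𝕜] Y)
  have hfx : IsUnit (1 + f x) := isUnit_iff_ne_zero.mpr (by simpa [f] using hunit)
  set T := dilatransvection f x hfx
  have hfA : ‖f.comp (A.symm : Y →L[𝕜] X)‖ ≤ t := by
    have : f.comp (A.symm : Y →L[𝕜] X) = l • g := by ext; simp [f]
    rw [this, norm_smul, hl]
    exact mul_le_of_le_one_right ht hg
  have hfy : ‖f y‖ = t * ‖A y‖ := by simp [f, hgy, hl]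
  have hT : ‖(T : X →L[𝕜] X)‖ ≤ 1 + t * ‖A x‖ :=
    (h T).trans ((norm_conj_dilatransvection_le A f x hfx).trans (by gcongr))
  calc t * (‖A y‖ * ‖x‖) = ‖f y‖ * ‖x‖ := by rw [hfy, mul_assoc]
    _ ≤ (‖(T : X →L[𝕜] X)‖ + 1) * ‖y‖ := norm_apply_mul_norm_le_norm_dilatransvection f x hfx y
    _ ≤ (1 + t * ‖A x‖ + 1) * ‖y‖ := by gcongr
    _ = t * (‖A x‖ * ‖y‖) + 2 * ‖y‖ := by ring

end

variable {X Y : Type*} [NormedAddCommGroup X] [NormedSpace ℂ X] [CompleteSpace X]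
  [NormedAddCommGroup Y] [NormedSpace ℂ Y] [CompleteSpace Y]

theorem stmt12 (A : X ≃L[ℂ] Y)
    (h : ∀ T : X ≃L[ℂ] X,
      ‖(T : X →L[ℂ] X)‖
        ≤ ‖(A : X →L[ℂ] Y).comp (((T : X →L[ℂ] X)).comp (A.symm : Y →L[ℂ] X))‖) :
    ∃ (c : ℂ) (U : X ≃ₗᵢ[ℂ] Y), ∀ x : X, A x = c • U x :=
  A.toLinearEquiv.exists_eq_smul_linearIsometryEquiv_of_norm_map_eq_mul (norm_nonneg _)
    ((A : X →L[ℂ] Y).norm_apply_eq_opNorm_mul_of_forall_le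
      (A.norm_apply_mul_norm_le_of_norm_le_norm_conj h))
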